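/- arXiv:math/0012173 — 8 statements merged into one kernel-verified Lean document; each statement's English description precedes it below -/
import Mathlib

section
/- In a category C with a distinguished object A, suppose (i) every arrow in C is a strict epimorphism, (ii) for every object X there exists an arrow A → X, and (iii) the functor Hom(A, -) preserves strict epimorphisms. Then every arrow f : X → A is an isomorphism. -/
/-! If `s` is a section of `f : X ⟶ A` chosen through the surjection `Hom(A, X) → Hom(A, A)`,
then `s` is a split mono and, like every arrow, an epimorphism; hence `s`, and with it `f`,
is an isomorphism. -/

open CategoryTheory

universe v u

/-- Grothendieck's strict epimorphism: `f : X ⟶ Y` is a strict epimorphism if every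
`g : X ⟶ Z` that coequalizes all pairs coequalized by `f` factors uniquely through `f`. -/
def IsStrictEpi {C : Type u} [Category.{v} C] {X Y : C} (f : X ⟶ Y) : Prop :=
  ∀ {Z : C} (g : X ⟶ Z),
    (∀ {W : C} (s t : W ⟶ X), s ≫ f = t ≫ f → s ≫ g = t ≫ g) →
    ∃! h : Y ⟶ Z, f ≫ h = g

lemma IsStrictEpi.epi {C : Type u} [Category.{v} C] {X Y : C} {f : X ⟶ Y}
    (hf : IsStrictEpi f) : Epi f := by
  refine ⟨fun {Z} a b hab => ?_⟩
  obtain ⟨k, -, hk⟩ := hf (f ≫ a) fun s t hst => by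
    rw [← Category.assoc, hst, Category.assoc]
  rw [hk a rfl, hk b hab.symm]

lemma IsStrictEpi.surjective_of_types {α β : Type v} {g : α → β}
    (hg : IsStrictEpi (C := Type v) (TypeCat.ofHom g)) : Function.Surjective g :=
  (epi_iff_surjective _).mp hg.epi

lemma isIso_of_comp_eq_id_of_epi {C : Type u} [Category.{v} C] {X Y : C} {f : X ⟶ Y}
    {s : Y ⟶ X} (hs : s ≫ f = 𝟙 Y) [Epi s] : IsIso f := by
  have : IsSplitMono s := IsSplitMono.mk' ⟨f, hs⟩
  have : IsIso s := isIso_of_epi_of_isSplitMono s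
  have : IsIso (s ≫ f) := hs ▸ inferInstance
  exact IsIso.of_isIso_comp_left s f

theorem stmt0_general {C : Type u} [Category.{v} C] (A : C)
    (h1 : ∀ {X Y : C} (f : X ⟶ Y), IsStrictEpi f)
    (h3 : ∀ {X Y : C} (f : X ⟶ Y), IsStrictEpi f →
      IsStrictEpi (C := Type v) (X := A ⟶ X) (Y := A ⟶ Y) (TypeCat.ofHom (fun g : A ⟶ X => g ≫ f))) :
    ∀ (X : C) (f : X ⟶ A), IsIso f := by
  intro X f
  obtain ⟨s, hs⟩ := IsStrictEpi.surjective_of_types (h3 f (h1 f)) (𝟙 A)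
  have : Epi s := IsStrictEpi.epi (h1 s)
  exact isIso_of_comp_eq_id_of_epi hs

theorem stmt0 {C : Type u} [Category.{v} C] (A : C)
    (h1 : ∀ {X Y : C} (f : X ⟶ Y), IsStrictEpi f)
    (h2 : ∀ X : C, Nonempty (A ⟶ X))
    (h3 : ∀ {X Y : C} (f : X ⟶ Y), IsStrictEpi f →
      IsStrictEpi (C := Type v) (X := A ⟶ X) (Y := A ⟶ Y) (TypeCat.ofHom (fun g : A ⟶ X => g ≫ f))) :
    ∀ (X : C) (f : X ⟶ A), IsIso f :=
  stmt0_general A h1 h3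
end

section
/- Galois Theorem (categorical form): Let C be a category with object A satisfying that every arrow is a strict epimorphism, every object admits an arrow from A, and Hom(A,-) preserves strict epimorphisms. Let x : A → X and y : A → Y be arrows with Fix(x) ⊆ Fix(y), where Fix(x) = {h ∈ Aut(A) | x∘h = x}. Then there exists a unique arrow f : X → Y with f∘x = y. -/
open CategoryTheory

universe v u

/-!
Every endomorphism `u` of `A` is invertible: since `Hom(A, u)` is a strict, hence surjective,
epimorphism, `u` has a left inverse, and a monoid in which every element has a left inverse is a
group. So if `s ≫ x = t ≫ x` for `s t : W ⟶ A`, pick `a : A ⟶ W`; then `(a ≫ t)⁻¹ ≫ a ≫ s` is an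
automorphism of `A` fixing `x`, hence fixing `y`, so `a ≫ s ≫ y = a ≫ t ≫ y`, and `a` is epi.
Thus `y` coequalizes every pair that `x` coequalizes, and strictness of `x` factors `y` through it.
-/

namespace IsStrictEpi

variable {C : Type u} [Category.{v} C]

theorem epi_s3 {X Y : C} {f : X ⟶ Y} (hf : IsStrictEpi f) : Epi f where
  left_cancellation g₁ g₂ hg := by
    obtain ⟨_, _, uniq⟩ := hf (f ≫ g₁) fun s t hst => by
      rw [← Category.assoc, ← Category.assoc, hst]
    exact (uniq g₁ rfl).trans (uniq g₂ hg.symm).symm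

theorem exists_comp_eq_of_postcomp {A X Y : C} {f : X ⟶ Y}
    (hf : IsStrictEpi (C := Type v) (X := A ⟶ X) (Y := A ⟶ Y)
      (TypeCat.ofHom (fun g : A ⟶ X => g ≫ f)))
    (b : A ⟶ Y) : ∃ a : A ⟶ X, a ≫ f = b :=
  (epi_iff_surjective _).mp hf.epi_s3 b

end IsStrictEpi

section Galois

variable {C : Type u} [Category.{v} C] {A : C}

theorem isIso_of_forall_exists_comp_eq_id (h : ∀ u : A ⟶ A, ∃ v : A ⟶ A, v ≫ u = 𝟙 A)
    (u : A ⟶ A) : IsIso u := by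
  obtain ⟨v, hvu⟩ := h u
  obtain ⟨w, hwv⟩ := h v
  have hu : u = w :=
    calc u = (w ≫ v) ≫ u := by rw [hwv, Category.id_comp]
      _ = w := by rw [Category.assoc, hvu, Category.comp_id]
  exact ⟨v, hu ▸ hwv, hvu⟩

theorem comp_eq_comp_of_fix_subset (hA : ∀ u : A ⟶ A, IsIso u) {X Y W : C}
    {x : A ⟶ X} {y : A ⟶ Y} (hfix : ∀ h : A ≅ A, h.hom ≫ x = x → h.hom ≫ y = y)
    (a : A ⟶ W) [Epi a] {s t : W ⟶ A} (hst : s ≫ x = t ≫ x) : s ≫ y = t ≫ y := by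
  have := hA (a ≫ s)
  have := hA (a ≫ t)
  have hfixy := hfix ((asIso (a ≫ t)).symm ≪≫ asIso (a ≫ s))
  simp only [Iso.trans_hom, Iso.symm_hom, asIso_inv, asIso_hom, IsIso.inv_comp_eq,
    Category.assoc] at hfixy
  exact (cancel_epi a).mp (hfixy (by rw [hst]))

end Galois

/-- Galois theorem (categorical form): if `Fix(x) ⊆ Fix(y)` then `y` factors
uniquely through `x`. -/
theorem stmt3 {C : Type u} [Category.{v} C] (A : C)
    (h1 : ∀ {X Y : C} (f : X ⟶ Y), IsStrictEpi f)
    (h2 : ∀ X : C, Nonempty (A ⟶ X))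
    (h3 : ∀ {X Y : C} (f : X ⟶ Y), IsStrictEpi f →
      IsStrictEpi (C := Type v) (X := A ⟶ X) (Y := A ⟶ Y) (TypeCat.ofHom (fun g : A ⟶ X => g ≫ f))) :
    ∀ (X Y : C) (x : A ⟶ X) (y : A ⟶ Y),
      (∀ h : A ≅ A, h.hom ≫ x = x → h.hom ≫ y = y) →
      ∃! f : X ⟶ Y, x ≫ f = y := by
  have hA : ∀ u : A ⟶ A, IsIso u := isIso_of_forall_exists_comp_eq_id fun u =>
    IsStrictEpi.exists_comp_eq_of_postcomp (h3 u (h1 u)) (𝟙 A)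
  intro X Y x y hfix
  refine h1 x y fun {W} s t hst => ?_
  obtain ⟨a⟩ := h2 W
  have := IsStrictEpi.epi_s3 (h1 a)
  exact comp_eq_comp_of_fix_subset hA hfix a hst
end

section
/- Let C be a category and F : C → Set a pro-representable functor such that every arrow of C is a strict epimorphism, F X is nonempty for every X, and F preserves strict epimorphisms. Then F is faithful and reflects isomorphisms. -/
/-!
Two arrows `f g : X ⟶ Y` with `F f = F g` agree at some element `x ∈ F X`; cofilteredness of
the category of elements equalizes the two arrows `(X, x) ⟶ (Y, f x)` by some `e : W ⟶ X`, and
`e` is epi, so `f = g`. If `F f` is bijective, faithfulness makes `f` mono, and a strict epi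
which is mono is an isomorphism.
-/

open CategoryTheory

universe v u

namespace IsStrictEpi

variable {C : Type u} [Category.{v} C] {X Y : C} {f : X ⟶ Y}

theorem epi_s6 (hf : IsStrictEpi f) : Epi f where
  left_cancellation u v huv := by
    obtain ⟨_, _, uniq⟩ := hf (f ≫ u) fun s t hst => by rw [reassoc_of% hst]
    exact (uniq u rfl).trans (uniq v huv.symm).symm

theorem isIso_of_mono (hf : IsStrictEpi f) [Mono f] : IsIso f := by
  obtain ⟨g, hfg, -⟩ := hf (𝟙 X) fun s t hst => by rw [cancel_mono f |>.mp hst]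
  have := hf.epi_s6
  exact ⟨g, hfg, by rw [← cancel_epi f, reassoc_of% hfg, Category.comp_id]⟩

end IsStrictEpi

theorem CategoryTheory.Functor.exists_comp_eq_comp_of_map_apply_eq {C : Type u} [Category.{v} C]
    (F : C ⥤ Type*) [IsCofiltered F.Elements] {X Y : C} {f g : X ⟶ Y} {x : F.obj X}
    (h : F.map f x = F.map g x) : ∃ (W : C) (e : W ⟶ X), e ≫ f = e ≫ g := by
  let fx : F.elementsMk X x ⟶ F.elementsMk Y (F.map f x) := ⟨f, rfl⟩
  let gx : F.elementsMk X x ⟶ F.elementsMk Y (F.map f x) := ⟨g, h.symm⟩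
  exact ⟨_, (IsCofiltered.eqHom fx gx).val,
    congrArg Subtype.val (IsCofiltered.eq_condition fx gx)⟩

theorem CategoryTheory.Functor.faithful_of_isCofiltered_elements {C : Type u} [Category.{v} C]
    (F : C ⥤ Type*) [IsCofiltered F.Elements] (hepi : ∀ {X Y : C} (f : X ⟶ Y), Epi f)
    (hne : ∀ X : C, Nonempty (F.obj X)) : F.Faithful where
  map_injective {X _ f g} hfg := by
    obtain ⟨x⟩ := hne X
    obtain ⟨_, e, he⟩ :=
      F.exists_comp_eq_comp_of_map_apply_eq (f := f) (g := g) (x := x) (by rw [hfg])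
    exact (cancel_epi e).mp he

theorem stmt6_general {C : Type u} [Category.{v} C] (F : C ⥤ Type v)
    (hpro : IsCofiltered F.Elements)
    (h1 : ∀ {X Y : C} (f : X ⟶ Y), IsStrictEpi f)
    (h2 : ∀ X : C, Nonempty (F.obj X)) :
    (∀ (X Y : C) (f g : X ⟶ Y), F.map f = F.map g → f = g) ∧
    (∀ (X Y : C) (f : X ⟶ Y), Function.Bijective (F.map f) → IsIso f) := by
  have := F.faithful_of_isCofiltered_elements (fun f => IsStrictEpi.epi_s6 (h1 f)) h2
  refine ⟨fun _ _ _ _ h => F.map_injective h, fun _ _ f hf => ?_⟩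
  have : Mono (F.map f) := (mono_iff_injective _).mpr hf.injective
  have : Mono f := F.mono_of_mono_map this
  exact IsStrictEpi.isIso_of_mono (h1 f)

/-- A pro-representable functor (cofiltered category of elements) on a category where
every arrow is a strict epimorphism, with all `F X` nonempty, which preserves strict
epimorphisms, is faithful and reflects isomorphisms. -/
theorem stmt6 {C : Type u} [Category.{v} C] (F : C ⥤ Type v)
    (hpro : IsCofiltered F.Elements)
    (h1 : ∀ {X Y : C} (f : X ⟶ Y), IsStrictEpi f)
    (h2 : ∀ X : C, Nonempty (F.obj X))
    (h3 : ∀ {X Y : C} (f : X ⟶ Y), IsStrictEpi f →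
      IsStrictEpi (C := Type v) (X := F.obj X) (Y := F.obj Y) (F.map f)) :
    (∀ (X Y : C) (f g : X ⟶ Y), F.map f = F.map g → f = g) ∧
    (∀ (X Y : C) (f : X ⟶ Y), Function.Bijective (F.map f) → IsIso f) :=
  stmt6_general F hpro h1 h2
end

section
/- Let C, F be as in the localic Galois setup (pro-representable F with cofiltered poset of elements, all arrows strict epis, F X nonempty, F preserves strict epis). Let f : W → X and g : W → Y be arrows, x₀ ∈ F X, y₀ ∈ F Y. If for all w ∈ F W, F(f)(w) = x₀ implies F(g)(w) = y₀, then there exists a unique h : X → Y with h∘f = g and F(h)(x₀) = y₀. -/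
open CategoryTheory

universe v u

lemma strictEpi_type_surjective {A B : Type v} (f : A ⟶ B) (h : IsStrictEpi f) :
    Function.Surjective f := by
  rw [← CategoryTheory.epi_iff_surjective]
  constructor
  intro Z u v huv
  obtain ⟨k, hk, hu⟩ := h (f ≫ u) (fun s t hst => by
    rw [← Category.assoc, ← Category.assoc, hst])
  rw [hu u rfl, hu v huv.symm]

/-- Localic Galois setup: if `F(f)(w) = x₀` implies `F(g)(w) = y₀` for all `w ∈ F W`,
then there is a unique `h : X ⟶ Y` with `h ∘ f = g` and `F(h)(x₀) = y₀`. -/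
theorem stmt7 {C : Type u} [Category.{v} C] (F : C ⥤ Type v)
    (hpro : IsCofiltered F.Elements)
    (hposet : ∀ (a b : F.Elements) (u v : a ⟶ b), u = v)
    (h1 : ∀ {X Y : C} (f : X ⟶ Y), IsStrictEpi f)
    (h2 : ∀ X : C, Nonempty (F.obj X))
    (h3 : ∀ {X Y : C} (f : X ⟶ Y), IsStrictEpi f →
      IsStrictEpi (C := Type v) (X := F.obj X) (Y := F.obj Y) (F.map f)) :
    ∀ {W X Y : C} (f : W ⟶ X) (g : W ⟶ Y) (x₀ : F.obj X) (y₀ : F.obj Y),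
      (∀ w : F.obj W, F.map f w = x₀ → F.map g w = y₀) →
      ∃! h : X ⟶ Y, f ≫ h = g ∧ F.map h x₀ = y₀ := by
  intro W X Y f g x₀ y₀ hker
  obtain ⟨w₀, hw₀⟩ := strictEpi_type_surjective (F.map f) (h3 f (h1 f)) x₀
  have hgw₀ : F.map g w₀ = y₀ := hker w₀ hw₀
  have key : ∀ {V : C} (s t : V ⟶ W), s ≫ f = t ≫ f → s ≫ g = t ≫ g := by
    intro V s t hst
    obtain ⟨v, hv⟩ := strictEpi_type_surjective (F.map s) (h3 s (h1 s)) w₀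
    have hsf : F.map (s ≫ g) v = y₀ := by
      rw [FunctorToTypes.map_comp_apply, hv, hgw₀]
    have htf : F.map (t ≫ g) v = y₀ := by
      rw [FunctorToTypes.map_comp_apply]
      apply hker
      have : F.map (t ≫ f) v = F.map (s ≫ f) v := by rw [hst]
      rw [FunctorToTypes.map_comp_apply, FunctorToTypes.map_comp_apply, hv, hw₀] at this
      exact this
    have := hposet ⟨V, v⟩ ⟨Y, y₀⟩ ⟨s ≫ g, hsf⟩ ⟨t ≫ g, htf⟩
    exact congrArg Subtype.val this
  obtain ⟨h, hh, huniq⟩ := h1 f g key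
  refine ⟨h, ⟨hh, ?_⟩, fun h' hh' => huniq h' hh'.1⟩
  rw [← hw₀, ← FunctorToTypes.map_comp_apply, hh, hgw₀]
end

section
/- For a set X, the frame presented by generators [⟨x|y⟩] for (x,y) ∈ X × X subject to relations [⟨z|x⟩] ∧ [⟨z|y⟩] = 0 and [⟨x|z⟩] ∧ [⟨y|z⟩] = 0 for x ≠ y, and ⋁_x [⟨x|z⟩] = 1 and ⋁_x [⟨z|x⟩] = 1 for each z, has as its points (frame homomorphisms to the two-element frame 2) exactly the bijections X → X. -/
universe u

section aux

variable {X : Type u}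

private def PtSet (X : Type u) := {p : X × X → Prop //
        (∀ z x y : X, x ≠ y → ¬(p (z, x) ∧ p (z, y))) ∧
        (∀ z x y : X, x ≠ y → ¬(p (x, z) ∧ p (y, z))) ∧
        (∀ z : X, ∃ x : X, p (x, z)) ∧
        (∀ z : X, ∃ x : X, p (z, x))}

private noncomputable def fwd (p : PtSet X) (z : X) : X := Classical.choose (p.2.2.2.2 z)
private noncomputable def bwd (p : PtSet X) (z : X) : X := Classical.choose (p.2.2.2.1 z)

private lemma fwd_spec (p : PtSet X) (z : X) : p.1 (z, fwd p z) :=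
  Classical.choose_spec (p.2.2.2.2 z)
private lemma bwd_spec (p : PtSet X) (z : X) : p.1 (bwd p z, z) :=
  Classical.choose_spec (p.2.2.2.1 z)

private lemma fwd_unique (p : PtSet X) {z y : X} (h : p.1 (z, y)) : fwd p z = y := by
  by_contra hne
  exact p.2.1 z (fwd p z) y hne ⟨fwd_spec p z, h⟩

private lemma bwd_unique (p : PtSet X) {z y : X} (h : p.1 (y, z)) : bwd p z = y := by
  by_contra hne
  exact p.2.2.1 z (bwd p z) y hne ⟨bwd_spec p z, h⟩

private noncomputable def toEquiv (p : PtSet X) : X ≃ X where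
  toFun := fwd p
  invFun := bwd p
  left_inv z := bwd_unique p (fwd_spec p z)
  right_inv z := fwd_unique p (bwd_spec p z)

private def ofEquiv (σ : X ≃ X) : PtSet X :=
  ⟨fun q => σ q.1 = q.2,
   ⟨fun z x y hxy ⟨h1, h2⟩ => hxy (h1.symm.trans h2),
    fun z x y hxy ⟨h1, h2⟩ => hxy (σ.injective (h1.trans h2.symm)),
    fun z => ⟨σ.symm z, σ.apply_symm_apply z⟩,
    fun z => ⟨σ z, rfl⟩⟩⟩

end aux

/-- The points of the frame `lAut(X)` presented by generators `[⟨x|y⟩]` subject to the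
relations `[⟨z|x⟩] ∧ [⟨z|y⟩] = 0`, `[⟨x|z⟩] ∧ [⟨y|z⟩] = 0` (for `x ≠ y`) and
`⋁ₓ [⟨x|z⟩] = 1`, `⋁ₓ [⟨z|x⟩] = 1` are exactly the bijections `X → X`.  A point of a
presented frame is exactly a 2-valued model of the presentation, i.e. a predicate on
the generators satisfying the relations; the bijection `e p` corresponding to a point
`p` is characterized by `p ⟨x|y⟩ ↔ (e p) x = y`. -/
theorem stmt8 (X : Type u) :
    ∃ e : {p : X × X → Prop //
        (∀ z x y : X, x ≠ y → ¬(p (z, x) ∧ p (z, y))) ∧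
        (∀ z x y : X, x ≠ y → ¬(p (x, z) ∧ p (y, z))) ∧
        (∀ z : X, ∃ x : X, p (x, z)) ∧
        (∀ z : X, ∃ x : X, p (z, x))} ≃ (X ≃ X),
      ∀ p (x y : X), p.1 (x, y) ↔ e p x = y := by
  refine ⟨⟨toEquiv, ofEquiv, ?_, ?_⟩, ?_⟩
  · intro p
    apply Subtype.ext
    funext q
    obtain ⟨x, y⟩ := q
    apply propext
    constructor
    · intro (h : fwd p x = y); exact h ▸ fwd_spec p x
    · intro h; exact fwd_unique p h
  · intro σ
    ext z
    exact fwd_unique (ofEquiv σ) rfl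
  · intro p x y
    constructor
    · intro h; exact fwd_unique p h
    · intro h; exact h ▸ fwd_spec p x
end

section
/- Let G be a localic group acting on a set X via a frame-homomorphism μ* : lAut(X) → G determined on generators by μ*[⟨x|y⟩] ∈ G. Then the relation x ∼ y defined by μ*[⟨x|y⟩] ≠ 0 is an equivalence relation on X. -/
universe u w

/-- Let a localic group `G` act on a set `X` via `μ* : lAut(X) → G`, determined on
generators by `μ : X → X → G` satisfying the frame relations of `lAut(X)`.  The
localic group structure is recorded by: the multiplication `m* : G → G ⊗ G`
(a frame map `mstar` into a frame `GG` with tensor `tens`, satisfying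
`m*μ*[⟨x|y⟩] = ⋁_z μ*[⟨x|z⟩] ⊗ μ*[⟨z|y⟩]`, and `a ⊗ b = 0 ↔ a = 0 ∨ b = 0`),
the inverse `ι*` with `ι*μ*[⟨x|y⟩] = μ*[⟨y|x⟩]`, and the identity point `e*` with
`e* μ*[⟨x|y⟩] ↔ x = y`.  Then `x ∼ y ↔ μ*[⟨x|y⟩] ≠ 0` is an equivalence relation. -/
theorem stmt12 (X : Type u) (G GG : Type w) [Order.Frame G] [Order.Frame GG]
    (μ : X → X → G)
    (hd1 : ∀ z x y : X, x ≠ y → μ z x ⊓ μ z y = ⊥)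
    (hd2 : ∀ z x y : X, x ≠ y → μ x z ⊓ μ y z = ⊥)
    (ht1 : ∀ z : X, (⨆ x : X, μ x z) = ⊤)
    (ht2 : ∀ z : X, (⨆ x : X, μ z x) = ⊤)
    (mstar : FrameHom G GG) (tens : G → G → GG)
    (htens : ∀ a b : G, tens a b = ⊥ ↔ a = ⊥ ∨ b = ⊥)
    (hm : ∀ x y : X, mstar (μ x y) = ⨆ z : X, tens (μ x z) (μ z y))
    (istar : FrameHom G G) (hinv : ∀ x y : X, istar (μ x y) = μ y x)
    (estar : FrameHom G Prop) (he : ∀ x y : X, estar (μ x y) ↔ x = y) :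
    Equivalence (fun x y : X => μ x y ≠ ⊥) := by
  constructor
  · intro x h
    have : estar (μ x x) := (he x x).mpr rfl
    rw [h, map_bot] at this
    exact this
  · intro x y hxy h
    apply hxy
    have := hinv y x
    rw [h, map_bot] at this
    exact this.symm
  · intro x y z hxy hyz h
    have hmz := hm x z
    rw [h, map_bot] at hmz
    have : tens (μ x y) (μ y z) = ⊥ := by
      have hle : tens (μ x y) (μ y z) ≤ ⨆ w : X, tens (μ x w) (μ w z) :=
        le_iSup (fun w => tens (μ x w) (μ w z)) y
      rw [← hmz] at hle
      exact le_bot_iff.mp hle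
    rcases (htens _ _).mp this with h1 | h1
    · exact hxy h1
    · exact hyz h1
end

section
/- Let G be a localic group and X, Y nonempty transitive G-sets (i.e., μ*[⟨x|y⟩] ≠ 0 for all x,y in each set). Then every morphism of G-sets f : X → Y is a surjective function on underlying sets. -/
universe u

/-- An action of a localic group `G` on a set `X`, given by its inverse image on the
generators `μ*[⟨x|y⟩]` of `lAut(X)`, satisfying the frame relations of `lAut(X)`. -/
structure LAction (G : Type u) [Order.Frame G] (X : Type u) where
  mu : X → X → G
  disj_right : ∀ z x y : X, x ≠ y → mu z x ⊓ mu z y = ⊥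
  disj_left : ∀ z x y : X, x ≠ y → mu x z ⊓ mu y z = ⊥
  total_left : ∀ z : X, (⨆ x : X, mu x z) = ⊤
  total_right : ∀ z : X, (⨆ x : X, mu z x) = ⊤

/-- A morphism of `G`-sets: `μ*[⟨x|x'⟩] ≤ μ*[⟨f x|f x'⟩]`. -/
def IsGMor {G : Type u} [Order.Frame G] {X Y : Type u}
    (a : LAction G X) (b : LAction G Y) (f : X → Y) : Prop :=
  ∀ x x' : X, a.mu x x' ≤ b.mu (f x) (f x')

/-- The action is transitive: all `μ*[⟨x|y⟩]` are nonzero. -/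
def IsTransitive {G : Type u} [Order.Frame G] {X : Type u} (a : LAction G X) : Prop :=
  ∀ x y : X, a.mu x y ≠ ⊥

/-- Every morphism between nonempty transitive G-sets is surjective. -/
theorem stmt13 (G : Type u) [Order.Frame G] (X Y : Type u) [Nonempty X] [Nonempty Y]
    (a : LAction G X) (b : LAction G Y)
    (ha : IsTransitive a) (hb : IsTransitive b)
    (f : X → Y) (hf : IsGMor a b f) :
    Function.Surjective f := by
  intro y
  obtain ⟨x₀⟩ := ‹Nonempty X›
  have h : b.mu (f x₀) y ⊓ (⨆ x : X, a.mu x₀ x) ≠ ⊥ := by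
    rw [a.total_right, inf_top_eq]
    exact hb _ _
  rw [inf_iSup_eq] at h
  have : ∃ x, b.mu (f x₀) y ⊓ a.mu x₀ x ≠ ⊥ := by
    by_contra hc
    push_neg at hc
    exact h (by simp [hc])
  obtain ⟨x, hx⟩ := this
  refine ⟨x, ?_⟩
  by_contra hne
  exact hx (le_bot_iff.mp (le_trans (inf_le_inf_left _ (hf x₀ x))
    (le_of_eq (b.disj_right (f x₀) y (f x) (Ne.symm hne)))))
end

section
/- Let C, F be as in the localic Galois setup (all arrows strict epis, F X ≠ ∅, F pro-representable preserving strict epis). In the site of definition of lAut(F) (the meet-semilattice of finite subsets of pairs (X,(x₀,x₁)) with the Wraith covers forcing relations to be bijections), if an object [A] has nonempty content (some generator [(M,⟨m₀|m₁⟩)] lies below [A]) and {[A_α] → [A]} is a cover in the generated pretopology, then some [A_α] has nonempty content. In particular no generator [(X,⟨x₀|x₁⟩)] is covered by the empty family, so its image in lAut(F) is nonzero. -/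
open CategoryTheory

universe v u

open scoped Classical

variable {C : Type u} [Category.{v} C]

/-- The order of the poset `D_{ΔF}` of pairs `(X, (x₀, x₁))`, `x₀ x₁ ∈ F X`. -/
def dle (F : C ⥤ Type v) (a b : Σ X : C, F.obj X × F.obj X) : Prop :=
  ∃ f : a.1 ⟶ b.1, F.map f a.2.1 = b.2.1 ∧ F.map f a.2.2 = b.2.2

/-- The order of the meet-semilattice `D(D_{ΔF})` of finite subsets of `D_{ΔF}`:
`[A] ≤ [B]` iff each generator of `B` is above some generator of `A`. -/
def lle (F : C ⥤ Type v) (A B : Finset (Σ X : C, F.obj X × F.obj X)) : Prop :=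
  ∀ b ∈ B, ∃ a ∈ A, dle F a b

/-- The covers of the pretopology on the site `D(D_{ΔF})` generated by the Wraith
covers forcing a natural relation to be a bijection: isomorphism covers, pullbacks
(meet = union of finite subsets), and composition. -/
inductive GCov (F : C ⥤ Type v) :
    Finset (Σ X : C, F.obj X × F.obj X) → Set (Finset (Σ X : C, F.obj X × F.obj X)) → Prop
  | empty_left (X : C) (x y z : F.obj X) (h : x ≠ y) :
      GCov F {⟨X, (x, z)⟩, ⟨X, (y, z)⟩} ∅
  | empty_right (X : C) (x y z : F.obj X) (h : x ≠ y) :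
      GCov F {⟨X, (z, x)⟩, ⟨X, (z, y)⟩} ∅
  | total_left (X : C) (z : F.obj X) :
      GCov F ∅ {S | ∃ x : F.obj X, S = {⟨X, (x, z)⟩}}
  | total_right (X : C) (z : F.obj X) :
      GCov F ∅ {S | ∃ x : F.obj X, S = {⟨X, (z, x)⟩}}
  | iso (u v : Finset (Σ X : C, F.obj X × F.obj X)) (h₁ : lle F u v) (h₂ : lle F v u) :
      GCov F u {v}
  | pull (u : Finset (Σ X : C, F.obj X × F.obj X))
      (S : Set (Finset (Σ X : C, F.obj X × F.obj X))) (h : GCov F u S)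
      (w : Finset (Σ X : C, F.obj X × F.obj X)) (hw : lle F w u) :
      GCov F w {t | ∃ s ∈ S, t = s ∪ w}
  | trans (u : Finset (Σ X : C, F.obj X × F.obj X))
      (S : Set (Finset (Σ X : C, F.obj X × F.obj X))) (h : GCov F u S)
      (T : Finset (Σ X : C, F.obj X × F.obj X) → Set (Finset (Σ X : C, F.obj X × F.obj X)))
      (hT : ∀ s ∈ S, GCov F s (T s)) :
      GCov F u {t | ∃ s ∈ S, t ∈ T s}

lemma dle_refl (F : C ⥤ Type v) (a : Σ X : C, F.obj X × F.obj X) : dle F a a :=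
  ⟨𝟙 _, by simp, by simp⟩

lemma dle_trans (F : C ⥤ Type v) {a b c : Σ X : C, F.obj X × F.obj X}
    (h : dle F a b) (h' : dle F b c) : dle F a c := by
  obtain ⟨f, hf1, hf2⟩ := h
  obtain ⟨g, hg1, hg2⟩ := h'
  exact ⟨f ≫ g, by simp [FunctorToTypes.map_comp_apply, hf1, hg1],
    by simp [FunctorToTypes.map_comp_apply, hf2, hg2]⟩

lemma strictEpi_surj {α β : Type v} (f : α ⟶ β) (h : IsStrictEpi f) :
    Function.Surjective f := by
  rw [show f = (f : α → β) from rfl, ← CategoryTheory.epi_iff_surjective]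
  constructor
  intro Z u v huv
  obtain ⟨w, hw, hu⟩ := h (f ≫ u) (fun s t hst => by
    rw [← Category.assoc, hst, Category.assoc])
  exact (hu u rfl).trans (hu v huv.symm).symm

lemma elements_min (F : C ⥤ Type v) [IsCofiltered F.Elements] (a b : F.Elements) :
    ∃ (L : C) (l : F.obj L) (f : L ⟶ a.1) (g : L ⟶ b.1),
      F.map f l = a.2 ∧ F.map g l = b.2 := by
  obtain ⟨L, f, g, -⟩ : ∃ (L : F.Elements) (f : L ⟶ a) (g : L ⟶ b), True :=
    ⟨IsCofiltered.min a b, IsCofiltered.minToLeft a b, IsCofiltered.minToRight a b, trivial⟩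
  exact ⟨L.1, L.2, f.val, g.val, f.2, g.2⟩

lemma gcov_key (F : C ⥤ Type v)
    (h1 : ∀ {X Y : C} (f : X ⟶ Y), IsStrictEpi f)
    (hpro : IsCofiltered F.Elements)
    (hposet : ∀ (a b : F.Elements) (u' v' : a ⟶ b), u' = v')
    (h3 : ∀ {X Y : C} (f : X ⟶ Y), IsStrictEpi f →
      IsStrictEpi (C := Type v) (X := F.obj X) (Y := F.obj Y) (F.map f)) :
    ∀ (A : Finset (Σ X : C, F.obj X × F.obj X))
      (S : Set (Finset (Σ X : C, F.obj X × F.obj X))),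
      GCov F A S → ∀ g, (∀ b ∈ A, dle F g b) →
      ∃ B ∈ S, ∃ g', (∀ b ∈ B, dle F g' b) ∧ dle F g' g := by
  haveI := hpro
  intro A S h
  induction h with
  | empty_left X x y z hxy =>
    intro g hg
    obtain ⟨f, hf1, hf2⟩ := hg ⟨X, (x, z)⟩ (by simp)
    obtain ⟨f', hf1', hf2'⟩ := hg ⟨X, (y, z)⟩ (by simp)
    have heq := hposet (F.elementsMk g.1 g.2.2) (F.elementsMk X z)
      (CategoryOfElements.homMk _ _ f hf2) (CategoryOfElements.homMk _ _ f' hf2')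
    have hff : f = f' := congrArg Subtype.val heq
    dsimp only at hf1 hf1'
    exact absurd (by rw [← hf1, ← hf1', hff]) hxy
  | empty_right X x y z hxy =>
    intro g hg
    obtain ⟨f, hf1, hf2⟩ := hg ⟨X, (z, x)⟩ (by simp)
    obtain ⟨f', hf1', hf2'⟩ := hg ⟨X, (z, y)⟩ (by simp)
    have heq := hposet (F.elementsMk g.1 g.2.1) (F.elementsMk X z)
      (CategoryOfElements.homMk _ _ f hf1) (CategoryOfElements.homMk _ _ f' hf1')
    have hff : f = f' := congrArg Subtype.val heq
    dsimp only at hf2 hf2'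
    exact absurd (by rw [← hf2, ← hf2', hff]) hxy
  | total_left X z =>
    intro g _
    obtain ⟨M, m₀, m₁⟩ := g
    obtain ⟨L, l, f, f', hf, hf'⟩ := elements_min F (F.elementsMk M m₁) (F.elementsMk X z)
    obtain ⟨l₀, hl₀⟩ := strictEpi_surj (F.map f) (h3 f (h1 f)) m₀
    refine ⟨{⟨X, (F.map f' l₀, z)⟩}, ⟨F.map f' l₀, rfl⟩, ⟨L, (l₀, l)⟩, ?_, ?_⟩
    · intro b hb
      rw [Finset.mem_singleton] at hb
      subst hb
      exact ⟨f', rfl, hf'⟩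
    · exact ⟨f, hl₀, hf⟩
  | total_right X z =>
    intro g _
    obtain ⟨M, m₀, m₁⟩ := g
    obtain ⟨L, l, f, f', hf, hf'⟩ := elements_min F (F.elementsMk M m₀) (F.elementsMk X z)
    obtain ⟨l₁, hl₁⟩ := strictEpi_surj (F.map f) (h3 f (h1 f)) m₁
    refine ⟨{⟨X, (z, F.map f' l₁)⟩}, ⟨F.map f' l₁, rfl⟩, ⟨L, (l, l₁)⟩, ?_, ?_⟩
    · intro b hb
      rw [Finset.mem_singleton] at hb
      subst hb
      exact ⟨f', hf', rfl⟩
    · exact ⟨f, hf, hl₁⟩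
  | iso u v h₁ h₂ =>
    intro g hg
    refine ⟨v, rfl, g, ?_, dle_refl F g⟩
    intro b hb
    obtain ⟨a, ha, hab⟩ := h₁ b hb
    exact dle_trans F (hg a ha) hab
  | pull u S h w hw ih =>
    intro g hg
    have hgu : ∀ b ∈ u, dle F g b := fun b hb => by
      obtain ⟨a, ha, hab⟩ := hw b hb
      exact dle_trans F (hg a ha) hab
    obtain ⟨B, hB, g', hg'B, hg'g⟩ := ih g hgu
    refine ⟨B ∪ w, ⟨B, hB, rfl⟩, g', ?_, hg'g⟩
    intro b hb
    rcases Finset.mem_union.1 hb with hb | hb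
    · exact hg'B b hb
    · exact dle_trans F hg'g (hg b hb)
  | trans u S h T hT ih ihT =>
    intro g hg
    obtain ⟨s, hs, g', hg's, hg'g⟩ := ih g hg
    obtain ⟨t, ht, g'', hg''t, hg''g'⟩ := ihT s hs g' hg's
    exact ⟨t, ⟨s, hs, ht⟩, g'', hg''t, dle_trans F hg''g' hg'g⟩

/-- Transitivity theorem of localic Galois theory: in the site defining `lAut(F)`,
any cover of an object with nonempty content contains a member with nonempty content;
in particular no generator `[(X,⟨x₀|x₁⟩)]` is covered by the empty family (so its
image in `lAut(F)` is nonzero). -/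
theorem stmt18 (F : C ⥤ Type v)
    (h1 : ∀ {X Y : C} (f : X ⟶ Y), IsStrictEpi f)
    (h2 : ∀ X : C, Nonempty (F.obj X))
    (hpro : IsCofiltered F.Elements)
    (hposet : ∀ (a b : F.Elements) (u' v' : a ⟶ b), u' = v')
    (h3 : ∀ {X Y : C} (f : X ⟶ Y), IsStrictEpi f →
      IsStrictEpi (C := Type v) (X := F.obj X) (Y := F.obj Y) (F.map f)) :
    (∀ (A : Finset (Σ X : C, F.obj X × F.obj X))
        (S : Set (Finset (Σ X : C, F.obj X × F.obj X))),
      GCov F A S → (∃ g, ∀ b ∈ A, dle F g b) →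
      ∃ B ∈ S, ∃ g, ∀ b ∈ B, dle F g b) ∧
    (∀ (X : C) (x₀ x₁ : F.obj X),
      ¬ GCov F {⟨X, (x₀, x₁)⟩} (∅ : Set (Finset (Σ X : C, F.obj X × F.obj X)))) := by
  constructor
  · intro A S h hA
    obtain ⟨g, hg⟩ := hA
    obtain ⟨B, hB, g', hg'B, _⟩ := gcov_key F @h1 hpro hposet @h3 A S h g hg
    exact ⟨B, hB, g', hg'B⟩
  · intro X x₀ x₁ h
    obtain ⟨B, hB, _⟩ := gcov_key F @h1 hpro hposet @h3 _ _ h ⟨X, (x₀, x₁)⟩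
      (fun b hb => by
        rw [Finset.mem_singleton] at hb
        subst hb
        exact dle_refl F _)
    exact hB
end
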